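/- arXiv:1809.10476 — 2 statements merged into one kernel-verified Lean document; each statement's English description precedes it below -/
import Mathlib

section
/- Explicit values of the Marchenko–Pastur Stieltjes transforms at p(x). Fix y > 0 and let x > y^{1/4}. With p = p(x) = (x²+1)(x²+y)/x² (note p > λ_+ = (1+√y)²), the following identities hold: m_1(p) = −1/(x²+y), m_2(p) = −1/(x²+1), m_1'(p) = x⁴/((x²+y)²(x⁴−y)), m_2'(p) = x⁴/((x²+1)²(x⁴−y)). Furthermore, defining T(t) = t m_1(t) m_2(t), one has T(p) = x^{−2} and T'(p) = (y−x⁴)^{−1}. -/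
/-!
Statement 8: Explicit values of the Marchenko–Pastur Stieltjes transforms at `p(x)`
(Lemma 4.1 of Bao–Ding–Wang).

For real `z > λ₊` the Stieltjes transforms are given by the continuous extension
from the upper half-plane, i.e. `i√((λ₊ − z)(z − λ₋))` becomes the real number
`√((z − λ₊)(z − λ₋))`.
-/

noncomputable section

/-- `λ₊ = (1 + √y)²`. -/
def lamP (y : ℝ) : ℝ := (1 + Real.sqrt y) ^ 2

/-- `λ₋ = (1 − √y)²`. -/
def lamM (y : ℝ) : ℝ := (1 - Real.sqrt y) ^ 2

/-- The Marchenko–Pastur Stieltjes transform `m₁` at real `z > λ₊`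
(continuous extension from the upper half-plane). -/
def m1R (y z : ℝ) : ℝ :=
  (1 - y - z + Real.sqrt ((z - lamP y) * (z - lamM y))) / (2 * z * y)

/-- The Marchenko–Pastur Stieltjes transform `m₂` at real `z > λ₊`
(continuous extension from the upper half-plane). -/
def m2R (y z : ℝ) : ℝ :=
  (y - 1 - z + Real.sqrt ((z - lamP y) * (z - lamM y))) / (2 * z)

/-- `p(x) = (x²+1)(x²+y)/x²`. -/
def pFun (y x : ℝ) : ℝ := (x ^ 2 + 1) * (x ^ 2 + y) / x ^ 2


/-!
For `z > λ₊` write `S(z) = √((z − λ₊)(z − λ₋))`. Since `λ₊ + λ₋ = 2(1 + y)` and `λ₊λ₋ = (1 − y)²`,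
the radicand at `p = x² + 1 + y + y/x²` is the perfect square `((x⁴ − y)/x²)²`, so `S(p) = (x⁴ − y)/x²`
and `m₁(p)`, `m₂(p)` become rational functions of `x`. The derivatives follow from the quotient rule
together with `S' = (z − 1 − y)/S`.
-/

def mpSqrt (y z : ℝ) : ℝ := Real.sqrt ((z - lamP y) * (z - lamM y))

section MarchenkoPastur

variable {y z x : ℝ}

theorem lamM_le_lamP (y : ℝ) : lamM y ≤ lamP y := by
  have := Real.sqrt_nonneg y
  unfold lamM lamP
  nlinarith

theorem lamP_add_lamM (hy : 0 ≤ y) : lamP y + lamM y = 2 * (1 + y) := by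
  unfold lamP lamM
  linear_combination 2 * Real.sq_sqrt hy

theorem lamP_mul_lamM (hy : 0 ≤ y) : lamP y * lamM y = (1 - y) ^ 2 := by
  unfold lamP lamM
  linear_combination (Real.sqrt y ^ 2 - 2 + y) * Real.sq_sqrt hy

theorem sub_lamP_mul_sub_lamM (hy : 0 ≤ y) (z : ℝ) :
    (z - lamP y) * (z - lamM y) = z ^ 2 - 2 * (1 + y) * z + (1 - y) ^ 2 := by
  linear_combination (-z) * lamP_add_lamM hy + lamP_mul_lamM hy

theorem sq_mpSqrt (hy : 0 ≤ y) (hz : lamP y < z) :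
    mpSqrt y z ^ 2 = z ^ 2 - 2 * (1 + y) * z + (1 - y) ^ 2 := by
  have hM := lamM_le_lamP y
  rw [mpSqrt, Real.sq_sqrt (by nlinarith), sub_lamP_mul_sub_lamM hy]

theorem mpSqrt_pos (hz : lamP y < z) : 0 < mpSqrt y z := by
  have hM := lamM_le_lamP y
  exact Real.sqrt_pos.2 (by nlinarith)

theorem pos_of_lamP_lt (hz : lamP y < z) : 0 < z :=
  lt_of_le_of_lt (sq_nonneg _) hz

theorem hasDerivAt_mpSqrt (hy : 0 ≤ y) (hz : lamP y < z) :
    HasDerivAt (mpSqrt y) ((z - 1 - y) / mpSqrt y z) z := by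
  have hS := (mpSqrt_pos hz).ne'
  have hdisc : HasDerivAt (fun t => (t - lamP y) * (t - lamM y))
      (1 * (z - lamM y) + (z - lamP y) * 1) z :=
    ((hasDerivAt_id z).sub_const _).mul ((hasDerivAt_id z).sub_const _)
  refine (hdisc.sqrt (Real.sqrt_ne_zero'.1 hS).ne').congr_deriv ?_
  change _ / (2 * mpSqrt y z) = _
  field_simp
  linear_combination (-1) * lamP_add_lamM hy

theorem hasDerivAt_m1R (hy : 0 < y) (hz : lamP y < z) :
    HasDerivAt (m1R y)
      ((((1 + y) * z - (1 - y) ^ 2) / mpSqrt y z - (1 - y)) / (2 * z ^ 2 * y)) z := by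
  have hz0 := (pos_of_lamP_lt hz).ne'
  have hS := (mpSqrt_pos hz).ne'
  have hnum : HasDerivAt (fun t => 1 - y - t + mpSqrt y t) (-1 + (z - 1 - y) / mpSqrt y z) z :=
    ((hasDerivAt_id z).const_sub (1 - y)).add (hasDerivAt_mpSqrt hy.le hz)
  have hden := ((hasDerivAt_id z).const_mul 2).mul_const y
  refine (hnum.div hden (by positivity)).congr_deriv ?_
  simp only [id]
  field_simp
  linear_combination (-1) * sq_mpSqrt hy.le hz

theorem hasDerivAt_m2R (hy : 0 ≤ y) (hz : lamP y < z) :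
    HasDerivAt (m2R y)
      ((((1 + y) * z - (1 - y) ^ 2) / mpSqrt y z + (1 - y)) / (2 * z ^ 2)) z := by
  have hz0 := (pos_of_lamP_lt hz).ne'
  have hS := (mpSqrt_pos hz).ne'
  have hnum : HasDerivAt (fun t => y - 1 - t + mpSqrt y t) (-1 + (z - 1 - y) / mpSqrt y z) z :=
    ((hasDerivAt_id z).const_sub (y - 1)).add (hasDerivAt_mpSqrt hy hz)
  have hden := (hasDerivAt_id z).const_mul 2
  refine (hnum.div hden (by positivity)).congr_deriv ?_
  simp only [id]
  field_simp
  linear_combination (-1) * sq_mpSqrt hy hz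

theorem lt_pow_four_of_rpow_lt (hy : 0 ≤ y) (h : y ^ ((1 : ℝ) / 4) < x) : y < x ^ 4 := by
  have hx : 0 ≤ x := (Real.rpow_nonneg hy _).trans h.le
  rw [one_div, Real.rpow_inv_lt_iff_of_pos hy hx four_pos] at h
  exact_mod_cast h

theorem ne_zero_of_lt_pow_four (hy : 0 ≤ y) (hx : y < x ^ 4) : x ≠ 0 := by
  rintro rfl
  norm_num at hx
  linarith

theorem lamP_lt_pFun (hy : 0 ≤ y) (hx : y < x ^ 4) : lamP y < pFun y x := by
  obtain ⟨s, hs, rfl⟩ : ∃ s, 0 ≤ s ∧ s ^ 2 = y := ⟨√y, Real.sqrt_nonneg y, Real.sq_sqrt hy⟩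
  have hx0 := ne_zero_of_lt_pow_four (sq_nonneg s) hx
  have hx2 : 0 < x ^ 2 := by positivity
  have hgap : s < x ^ 2 := by nlinarith
  rw [lamP, Real.sqrt_sq hs, pFun, lt_div_iff₀ hx2]
  nlinarith [mul_pos hx2 (sub_pos.2 hgap)]

theorem mpSqrt_pFun (hy : 0 ≤ y) (hx : y < x ^ 4) : mpSqrt y (pFun y x) = (x ^ 4 - y) / x ^ 2 := by
  have hx0 := ne_zero_of_lt_pow_four hy hx
  have hsq : (pFun y x - lamP y) * (pFun y x - lamM y) = ((x ^ 4 - y) / x ^ 2) ^ 2 := by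
    rw [sub_lamP_mul_sub_lamM hy, pFun]
    field_simp
    ring
  rw [mpSqrt, hsq, Real.sqrt_sq (div_nonneg (sub_pos.2 hx).le (sq_nonneg x))]

theorem m1R_pFun (hy : 0 < y) (hx : y < x ^ 4) : m1R y (pFun y x) = -1 / (x ^ 2 + y) := by
  have hx0 := ne_zero_of_lt_pow_four hy.le hx
  rw [m1R, ← mpSqrt, mpSqrt_pFun hy.le hx, pFun]
  field_simp
  ring

theorem m2R_pFun (hy : 0 < y) (hx : y < x ^ 4) : m2R y (pFun y x) = -1 / (x ^ 2 + 1) := by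
  have hx0 := ne_zero_of_lt_pow_four hy.le hx
  rw [m2R, ← mpSqrt, mpSqrt_pFun hy.le hx, pFun]
  field_simp
  ring

theorem hasDerivAt_m1R_pFun (hy : 0 < y) (hx : y < x ^ 4) :
    HasDerivAt (m1R y) (x ^ 4 / ((x ^ 2 + y) ^ 2 * (x ^ 4 - y))) (pFun y x) := by
  refine (hasDerivAt_m1R hy (lamP_lt_pFun hy.le hx)).congr_deriv ?_
  have hx0 := ne_zero_of_lt_pow_four hy.le hx
  have hx4 : x ^ 4 - y ≠ 0 := (sub_pos.2 hx).ne'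
  rw [mpSqrt_pFun hy.le hx, pFun]
  field_simp
  ring

theorem hasDerivAt_m2R_pFun (hy : 0 < y) (hx : y < x ^ 4) :
    HasDerivAt (m2R y) (x ^ 4 / ((x ^ 2 + 1) ^ 2 * (x ^ 4 - y))) (pFun y x) := by
  refine (hasDerivAt_m2R hy.le (lamP_lt_pFun hy.le hx)).congr_deriv ?_
  have hx0 := ne_zero_of_lt_pow_four hy.le hx
  have hx4 : x ^ 4 - y ≠ 0 := (sub_pos.2 hx).ne'
  rw [mpSqrt_pFun hy.le hx, pFun]
  field_simp
  ring

theorem hasDerivAt_mul_m1R_m2R_pFun (hy : 0 < y) (hx : y < x ^ 4) :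
    HasDerivAt (fun t => t * m1R y t * m2R y t) (y - x ^ 4)⁻¹ (pFun y x) := by
  refine (((hasDerivAt_id' _).mul (hasDerivAt_m1R_pFun hy hx)).mul
    (hasDerivAt_m2R_pFun hy hx)).congr_deriv ?_
  have hx0 := ne_zero_of_lt_pow_four hy.le hx
  have hx4 : x ^ 4 - y ≠ 0 := (sub_pos.2 hx).ne'
  have hx4' : y - x ^ 4 ≠ 0 := (sub_neg.2 hx).ne
  simp only [Pi.mul_apply]
  rw [m1R_pFun hy hx, m2R_pFun hy hx, pFun]
  field_simp
  ring

end MarchenkoPastur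

/-- **Values of the Marchenko–Pastur Stieltjes transforms at `p(x)`.** -/
theorem mp_stieltjes_values_at_p (y x : ℝ) (hy : 0 < y) (hx : y ^ ((1 : ℝ) / 4) < x) :
    m1R y (pFun y x) = -1 / (x ^ 2 + y) ∧
    m2R y (pFun y x) = -1 / (x ^ 2 + 1) ∧
    deriv (m1R y) (pFun y x) = x ^ 4 / ((x ^ 2 + y) ^ 2 * (x ^ 4 - y)) ∧
    deriv (m2R y) (pFun y x) = x ^ 4 / ((x ^ 2 + 1) ^ 2 * (x ^ 4 - y)) ∧
    (fun t => t * m1R y t * m2R y t) (pFun y x) = x⁻¹ ^ 2 ∧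
    deriv (fun t => t * m1R y t * m2R y t) (pFun y x) = (y - x ^ 4)⁻¹ := by
  have hx4 := lt_pow_four_of_rpow_lt hy.le hx
  have hx0 := ne_zero_of_lt_pow_four hy.le hx4
  refine ⟨m1R_pFun hy hx4, m2R_pFun hy hx4, (hasDerivAt_m1R_pFun hy hx4).deriv,
    (hasDerivAt_m2R_pFun hy hx4).deriv, ?_, (hasDerivAt_mul_m1R_m2R_pFun hy hx4).deriv⟩
  beta_reduce
  rw [m1R_pFun hy hx4, m2R_pFun hy hx4, pFun]
  field_simp

end
end

section
/- Cumulant expansion (generalized Stein lemma). Let ℓ ∈ N be fixed and f ∈ C^{ℓ+1}(R) with bounded derivatives. Let ξ be a centered real random variable with finite first ℓ+2 moments, and let κ_k(ξ) denote the k-th cumulant of ξ. Then there is a constant C_ℓ (depending only on ℓ) such that for every χ > 0: | E(ξ f(ξ)) − Σ_{k=1}^ℓ (κ_{k+1}(ξ)/k!) E f^{(k)}(ξ) | ≤ C_ℓ E(|ξ|^{ℓ+2}) · sup_{|t|≤χ} |f^{(ℓ+1)}(t)| + C_ℓ E(|ξ|^{ℓ+2} 1_{|ξ|>χ}) · sup_{t∈R}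 |f^{(ℓ+1)}(t)|. -/
/-!
Write `f = P + g` with `P` the Maclaurin polynomial of `f` of degree `ℓ`. The expansion is exact
for `P`: for `x ↦ x ^ j` with `j ≤ ℓ` it is the moment–cumulant recursion
`E ξ^(j+1) = ∑ₖ C(j,k) κ_(k+1) E ξ^(j-k)`, the term `k = 0` vanishing because `κ₁ = E ξ = 0`.
The remainder `g` vanishes to order `ℓ` at `0` and `g^(ℓ+1) = f^(ℓ+1)`, so by the mean value
theorem `|g^(k)(x)| ≤ |x|^(ℓ+1-k) sup_{|t| ≤ |x|} |f^(ℓ+1)(t)|`, which is at most the local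
supremum when `|x| ≤ χ` and the global one otherwise. The recursion also bounds
`|κ_m| ≤ 2^(m²) E|ξ|^m`, and Chebyshev's association inequality for the nondecreasing functions
`|ξ|^a` and `|ξ|^b 1_{|ξ|>χ}` of `|ξ|` merges each product `|κ_(k+1)| E(|ξ|^(ℓ+1-k) ⋯)` into a
single moment of order `ℓ + 2`.
-/

open MeasureTheory Finset

theorem abs_iteratedDeriv_le_mul_abs_pow {g : ℝ → ℝ} {n : ℕ} (hg : ContDiff ℝ n g)
    (h0 : ∀ k < n, iteratedDeriv k g 0 = 0) {r M : ℝ}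
    (hM : ∀ t, |t| ≤ r → |iteratedDeriv n g t| ≤ M) {k i : ℕ} (hki : k + i = n) {x : ℝ}
    (hx : |x| ≤ r) : |iteratedDeriv k g x| ≤ M * |x| ^ i := by
  induction i generalizing k x with
  | zero => simpa [← hki] using hM x hx
  | succ i ih =>
    have hM0 : 0 ≤ M := (abs_nonneg _).trans (hM 0 (by simpa using (abs_nonneg x).trans hx))
    have hderiv :
        ∀ t ∈ Metric.closedBall (0 : ℝ) |x|, ‖deriv (iteratedDeriv k g) t‖ ≤ M * |x| ^ i := by
      intro t ht
      rw [mem_closedBall_zero_iff, Real.norm_eq_abs] at ht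
      rw [← iteratedDeriv_succ, Real.norm_eq_abs]
      exact (ih (by omega) (ht.trans hx)).trans (by gcongr)
    have hdiff : ∀ t ∈ Metric.closedBall (0 : ℝ) |x|, DifferentiableAt ℝ (iteratedDeriv k g) t :=
      fun t _ => hg.differentiable_iteratedDeriv k (by exact_mod_cast (by omega : k < n)) t
    have hmvt := (convex_closedBall (0 : ℝ) |x|).norm_image_sub_le_of_norm_deriv_le hdiff hderiv
      (Metric.mem_closedBall_self (abs_nonneg x)) (y := x) (by simp)
    simpa [h0 k (by omega), pow_succ, mul_assoc] using hmvt

theorem iteratedDeriv_sum_mul_pow (c : ℕ → ℝ) (s : Finset ℕ) (k : ℕ) (x : ℝ) :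
    iteratedDeriv k (fun y => ∑ j ∈ s, c j * y ^ j) x
      = ∑ j ∈ s, c j * ((j.descFactorial k : ℝ) * x ^ (j - k)) := by
  rw [iteratedDeriv_fun_sum fun j _ => (contDiff_const.mul (contDiff_id.pow j)).contDiffAt]
  refine sum_congr rfl fun j _ => ?_
  rw [iteratedDeriv_const_mul _ (contDiff_id.pow j).contDiffAt]
  simp

noncomputable def maclaurinPoly (f : ℝ → ℝ) (n : ℕ) : ℝ → ℝ :=
  fun x => ∑ j ∈ range (n + 1), iteratedDeriv j f 0 / (j.factorial : ℝ) * x ^ j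

theorem contDiff_maclaurinPoly (f : ℝ → ℝ) (n : ℕ) {m : WithTop ℕ∞} :
    ContDiff ℝ m (maclaurinPoly f n) :=
  ContDiff.sum fun j _ => contDiff_const.mul (contDiff_id.pow j)

theorem iteratedDeriv_maclaurinPoly_zero (f : ℝ → ℝ) {n k : ℕ} (hk : k ≤ n) :
    iteratedDeriv k (maclaurinPoly f n) 0 = iteratedDeriv k f 0 := by
  unfold maclaurinPoly
  rw [iteratedDeriv_sum_mul_pow, sum_eq_single k]
  · simp [Nat.descFactorial_self, (Nat.factorial_pos k).ne']
  · intro j _ hjk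
    rcases hjk.lt_or_gt with hlt | hgt
    · simp [Nat.descFactorial_eq_zero_iff_lt.2 hlt]
    · simp [zero_pow (Nat.sub_ne_zero_of_lt hgt)]
  · simp; omega

theorem iteratedDeriv_maclaurinPoly_of_lt (f : ℝ → ℝ) {n k : ℕ} (hnk : n < k) (x : ℝ) :
    iteratedDeriv k (maclaurinPoly f n) x = 0 := by
  unfold maclaurinPoly
  rw [iteratedDeriv_sum_mul_pow]
  exact sum_eq_zero fun j hj => by
    simp [Nat.descFactorial_eq_zero_iff_lt.2 ((mem_range.1 hj).trans_le hnk)]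

theorem iteratedDeriv_sub_maclaurinPoly_zero {f : ℝ → ℝ} {n k : ℕ} (hf : ContDiff ℝ n f)
    (hk : k ≤ n) : iteratedDeriv k (f - maclaurinPoly f n) 0 = 0 := by
  rw [iteratedDeriv_sub ((hf.of_le (by exact_mod_cast hk)).contDiffAt)
    (contDiff_maclaurinPoly f n).contDiffAt, iteratedDeriv_maclaurinPoly_zero f hk, sub_self]

theorem iteratedDeriv_succ_sub_maclaurinPoly {f : ℝ → ℝ} {n : ℕ} (hf : ContDiff ℝ (n + 1) f)
    (x : ℝ) : iteratedDeriv (n + 1) (f - maclaurinPoly f n) x = iteratedDeriv (n + 1) f x := by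
  rw [iteratedDeriv_sub (by exact_mod_cast hf.contDiffAt) (contDiff_maclaurinPoly f n).contDiffAt,
    iteratedDeriv_maclaurinPoly_of_lt f n.lt_succ_self, sub_zero]

section Moments

variable {Ω : Type*} [MeasurableSpace Ω] {μ : Measure Ω} {ξ : Ω → ℝ}

theorem integrable_comp_of_abs_le_mul_abs_pow {H : ℝ → ℝ} (hH : Continuous H) {M : ℝ} {i : ℕ}
    (hbound : ∀ x, |H x| ≤ M * |x| ^ i) (hξ : Measurable ξ)
    (hint : Integrable (fun ω => |ξ ω| ^ i) μ) : Integrable (fun ω => H (ξ ω)) μ :=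
  (hint.const_mul M).mono' (hH.measurable.comp hξ).aestronglyMeasurable
    (ae_of_all _ fun ω => hbound (ξ ω))

theorem abs_integral_comp_le {H : ℝ → ℝ} {χ M₁ M₂ : ℝ} {i : ℕ} (hM₁ : 0 ≤ M₁)
    (hin : ∀ x, |x| ≤ χ → |H x| ≤ M₁ * |x| ^ i) (hout : ∀ x, |H x| ≤ M₂ * |x| ^ i)
    (hξ : Measurable ξ) (hint : Integrable (fun ω => |ξ ω| ^ i) μ) :
    |∫ ω, H (ξ ω) ∂μ| ≤ M₁ * ∫ ω, |ξ ω| ^ i ∂μ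
      + M₂ * ∫ ω, {ω' | χ < |ξ ω'|}.indicator (fun ω' => |ξ ω'| ^ i) ω ∂μ := by
  set A := {ω' | χ < |ξ ω'|}
  have hA : MeasurableSet A := measurableSet_lt measurable_const hξ.abs
  have hbound (ω : Ω) :
      |H (ξ ω)| ≤ M₁ * |ξ ω| ^ i + M₂ * A.indicator (fun ω' => |ξ ω'| ^ i) ω := by
    by_cases hω : ω ∈ A
    · rw [Set.indicator_of_mem hω]
      nlinarith [hout (ξ ω), pow_nonneg (abs_nonneg (ξ ω)) i]
    · rw [Set.indicator_of_notMem hω, mul_zero, add_zero]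
      exact hin _ (not_lt.1 hω)
  have hM₁int := hint.const_mul M₁
  have hM₂int := (hint.indicator hA).const_mul M₂
  rw [← integral_const_mul, ← integral_const_mul, ← integral_add hM₁int hM₂int]
  exact norm_integral_le_of_norm_le (hM₁int.add hM₂int)
    (ae_of_all _ fun ω => (Real.norm_eq_abs _).trans_le (hbound ω))

variable [IsProbabilityMeasure μ]

theorem integral_mul_integral_le_integral_mul_of_monovary {u v : Ω → ℝ} (huv : Monovary u v)
    (hu : Integrable u μ) (hv : Integrable v μ) (huv_int : Integrable (fun ω => u ω * v ω) μ) :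
    (∫ ω, u ω ∂μ) * (∫ ω, v ω ∂μ) ≤ ∫ ω, u ω * v ω ∂μ := by
  -- symmetrize `0 ≤ (u ω - u ω') * (v ω - v ω')` and integrate in both variables
  have pointwise (ω ω' : Ω) : u ω * v ω' + u ω' * v ω ≤ u ω * v ω + u ω' * v ω' := by
    nlinarith [monovary_iff_forall_mul_nonneg.1 huv ω ω']
  have integrated (ω' : Ω) :
      (∫ ω, u ω ∂μ) * v ω' + u ω' * (∫ ω, v ω ∂μ) ≤ (∫ ω, u ω * v ω ∂μ) + u ω' * v ω' := by
    have h := integral_mono (f := fun ω => u ω * v ω' + u ω' * v ω)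
      (g := fun ω => u ω * v ω + u ω' * v ω') ((hu.mul_const _).add (hv.const_mul _))
      (huv_int.add (integrable_const _)) (pointwise · ω')
    rwa [integral_add (hu.mul_const _) (hv.const_mul _), integral_add huv_int (integrable_const _),
      integral_mul_const, integral_const_mul, integral_const, probReal_univ, one_smul] at h
  have h := integral_mono (f := fun ω' => (∫ ω, u ω ∂μ) * v ω' + u ω' * ∫ ω, v ω ∂μ)
    (g := fun ω' => (∫ ω, u ω * v ω ∂μ) + u ω' * v ω') ((hv.const_mul _).add (hu.mul_const _))
    ((integrable_const _).add huv_int) integrated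
  rw [integral_add (hv.const_mul _) (hu.mul_const _), integral_add (integrable_const _) huv_int,
    integral_mul_const, integral_const_mul, integral_const, probReal_univ, one_smul] at h
  linarith

theorem integral_abs_pow_mul_integral_abs_pow_le {a b : ℕ}
    (ha : Integrable (fun ω => |ξ ω| ^ a) μ) (hb : Integrable (fun ω => |ξ ω| ^ b) μ)
    (hab : Integrable (fun ω => |ξ ω| ^ (a + b)) μ) :
    (∫ ω, |ξ ω| ^ a ∂μ) * (∫ ω, |ξ ω| ^ b ∂μ) ≤ ∫ ω, |ξ ω| ^ (a + b) ∂μ := by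
  have hmono : Monovary (fun ω => |ξ ω| ^ a) (fun ω => |ξ ω| ^ b) :=
    ((monovary_self fun ω => |ξ ω|).pow_left₀ (fun ω => abs_nonneg (ξ ω)) a).pow_right₀
      (fun ω => abs_nonneg (ξ ω)) b
  simpa only [pow_add] using integral_mul_integral_le_integral_mul_of_monovary hmono ha hb
    (by simpa only [pow_add] using hab)

theorem integral_abs_pow_mul_integral_tail_le (χ : ℝ) (hξ : Measurable ξ) {a b : ℕ}
    (ha : Integrable (fun ω => |ξ ω| ^ a) μ) (hb : Integrable (fun ω => |ξ ω| ^ b) μ)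
    (hab : Integrable (fun ω => |ξ ω| ^ (a + b)) μ) :
    (∫ ω, |ξ ω| ^ a ∂μ) * (∫ ω, {ω' | χ < |ξ ω'|}.indicator (fun ω' => |ξ ω'| ^ b) ω ∂μ)
      ≤ ∫ ω, {ω' | χ < |ξ ω'|}.indicator (fun ω' => |ξ ω'| ^ (a + b)) ω ∂μ := by
  set A := {ω' | χ < |ξ ω'|}
  have hA : MeasurableSet A := measurableSet_lt measurable_const hξ.abs
  have habs_mono : Monovary (fun ω => |ξ ω|) (A.indicator fun ω => |ξ ω| ^ b) := by
    intro i j hij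
    by_contra! hji
    by_cases hj : j ∈ A
    · have hi : i ∈ A := lt_trans (show χ < |ξ j| from hj) hji
      rw [Set.indicator_of_mem hi, Set.indicator_of_mem hj] at hij
      exact hij.not_ge (pow_le_pow_left₀ (abs_nonneg _) hji.le b)
    · rw [Set.indicator_of_notMem hj] at hij
      exact hij.not_ge (Set.indicator_nonneg (fun ω _ => pow_nonneg (abs_nonneg (ξ ω)) b) i)
  have hprod : (fun ω => |ξ ω| ^ a * A.indicator (fun ω => |ξ ω| ^ b) ω)
      = A.indicator fun ω => |ξ ω| ^ (a + b) := by
    ext ω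
    by_cases hω : ω ∈ A <;> simp [hω, pow_add]
  have hmono : Monovary (fun ω => |ξ ω| ^ a) (A.indicator fun ω => |ξ ω| ^ b) :=
    habs_mono.pow_left₀ (fun ω => abs_nonneg (ξ ω)) a
  have hcheb := integral_mul_integral_le_integral_mul_of_monovary hmono ha (hb.indicator hA)
    (by rw [hprod]; exact hab.indicator hA)
  rwa [hprod] at hcheb

end Moments

-- Makes `2 ^ (m * m)` a constant that propagates through the induction in
-- `HasCumulantsUpTo.abs_cumulant_le`.
theorem one_add_sum_choose_mul_two_pow_sq_le (p : ℕ) :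
    1 + ∑ k ∈ Icc 1 p, p.choose (k - 1) * 2 ^ (k * k) ≤ 2 ^ ((p + 1) * (p + 1)) := by
  have hterm : ∀ k ∈ Icc 1 p, p.choose (k - 1) * 2 ^ (k * k) ≤ 2 ^ p * 2 ^ (p * p) :=
    fun k hk => Nat.mul_le_mul (Nat.choose_le_two_pow p _)
      (Nat.pow_le_pow_right two_pos (Nat.mul_self_le_mul_self (mem_Icc.1 hk).2))
  have hsum := sum_le_sum hterm
  rw [sum_const, Nat.card_Icc, Nat.add_sub_cancel, smul_eq_mul] at hsum
  have hp : p ≤ 2 ^ p := p.lt_two_pow_self.le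
  have h1 : 1 ≤ 2 ^ (p * p + 2 * p) := Nat.one_le_two_pow
  calc 1 + ∑ k ∈ Icc 1 p, p.choose (k - 1) * 2 ^ (k * k)
      ≤ 1 + 2 ^ p * (2 ^ p * 2 ^ (p * p)) := by gcongr; exact hsum.trans (by gcongr)
    _ = 1 + 2 ^ (p * p + 2 * p) := by ring
    _ ≤ 2 ^ ((p + 1) * (p + 1)) := by
      rw [show (p + 1) * (p + 1) = (p * p + 2 * p) + 1 by ring, pow_succ]; omega

section Cumulants

variable {Ω : Type*} [MeasurableSpace Ω] {μ : Measure Ω} {ξ : Ω → ℝ} {κ : ℕ → ℝ} {n ℓ : ℕ}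

def HasCumulantsUpTo (μ : Measure Ω) (ξ : Ω → ℝ) (κ : ℕ → ℝ) (n : ℕ) : Prop :=
  ∀ m : ℕ, 1 ≤ m → m ≤ n →
    ∫ ω, ξ ω ^ m ∂μ = ∑ k ∈ Icc 1 m, ((m - 1).choose (k - 1) : ℝ) * κ k * ∫ ω, ξ ω ^ (m - k) ∂μ

namespace HasCumulantsUpTo

theorem mono (h : HasCumulantsUpTo μ ξ κ n) {m : ℕ} (hmn : m ≤ n) : HasCumulantsUpTo μ ξ κ m :=
  fun k hk hkm => h k hk (hkm.trans hmn)

theorem integral_pow_succ (h : HasCumulantsUpTo μ ξ κ n) (hκ : κ 1 = 0) {j : ℕ}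
    (hjn : j + 1 ≤ n) (hjℓ : j ≤ ℓ) :
    ∫ ω, ξ ω ^ (j + 1) ∂μ
      = ∑ k ∈ Icc 1 ℓ, (j.choose k : ℝ) * κ (k + 1) * ∫ ω, ξ ω ^ (j - k) ∂μ := by
  set f : ℕ → ℝ := fun k => (j.choose k : ℝ) * κ (k + 1) * ∫ ω, ξ ω ^ (j - k) ∂μ
  have hshift : ∑ k ∈ Icc 1 (j + 1), ((j + 1 - 1).choose (k - 1) : ℝ) * κ k
      * ∫ ω, ξ ω ^ (j + 1 - k) ∂μ = ∑ k ∈ range (j + 1), f k := by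
    rw [← Ico_add_one_right_eq_Icc, sum_Ico_eq_sum_range]
    refine sum_congr rfl fun k _ => ?_
    simp only [f, Nat.add_sub_cancel, add_comm 1 k, Nat.add_sub_add_right]
  have hextend : ∑ k ∈ range (j + 1), f k = ∑ k ∈ range (ℓ + 1), f k :=
    sum_subset (range_subset_range.2 (by omega)) fun k _ hk => by
      simp [f, Nat.choose_eq_zero_of_lt (by simpa using hk : j < k)]
  rw [h (j + 1) (by omega) hjn, hshift, hextend, range_eq_Ico,
    sum_eq_sum_Ico_succ_bot (by omega), Ico_add_one_right_eq_Icc]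
  simp [f, hκ]

variable [IsProbabilityMeasure μ]

theorem cumulant_one (h : HasCumulantsUpTo μ ξ κ n) (hn : 1 ≤ n) : κ 1 = ∫ ω, ξ ω ∂μ := by
  simpa using (h 1 le_rfl hn).symm

theorem abs_cumulant_succ_le (h : HasCumulantsUpTo μ ξ κ n) {p : ℕ} (hp : p + 1 ≤ n) :
    |κ (p + 1)| ≤ ∫ ω, |ξ ω| ^ (p + 1) ∂μ
      + ∑ k ∈ Icc 1 p, (p.choose (k - 1) : ℝ) * (|κ k| * ∫ ω, |ξ ω| ^ (p + 1 - k) ∂μ) := by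
  have habs (j : ℕ) : |∫ ω, ξ ω ^ j ∂μ| ≤ ∫ ω, |ξ ω| ^ j ∂μ := by
    simpa only [abs_pow] using abs_integral_le_integral_abs (f := fun ω => ξ ω ^ j)
  have hrec := h (p + 1) (by omega) hp
  rw [sum_Icc_succ_top (by omega)] at hrec
  simp only [Nat.add_sub_cancel, Nat.choose_self, Nat.sub_self, pow_zero, integral_const,
    probReal_univ, one_smul, Nat.cast_one, one_mul, mul_one] at hrec
  rw [show κ (p + 1) = ∫ ω, ξ ω ^ (p + 1) ∂μ
      - ∑ k ∈ Icc 1 p, (p.choose (k - 1) : ℝ) * κ k * ∫ ω, ξ ω ^ (p + 1 - k) ∂μ by linarith]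
  refine (abs_sub _ _).trans (add_le_add (habs _) ((abs_sum_le_sum_abs _ _).trans
    (sum_le_sum fun k _ => ?_)))
  rw [abs_mul, abs_mul, Nat.abs_cast, mul_assoc]
  gcongr
  exact habs _

theorem abs_cumulant_le (h : HasCumulantsUpTo μ ξ κ n)
    (hint : ∀ m ≤ n, Integrable (fun ω => |ξ ω| ^ m) μ) {m : ℕ} (hm : 1 ≤ m) (hmn : m ≤ n) :
    |κ m| ≤ 2 ^ (m * m) * ∫ ω, |ξ ω| ^ m ∂μ := by
  induction m using Nat.strong_induction_on with
  | _ m ih =>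
  obtain ⟨p, rfl⟩ : ∃ p, m = p + 1 := ⟨m - 1, by omega⟩
  have hterm : ∀ k ∈ Icc 1 p, (p.choose (k - 1) : ℝ) * (|κ k| * ∫ ω, |ξ ω| ^ (p + 1 - k) ∂μ)
      ≤ (p.choose (k - 1) : ℝ) * 2 ^ (k * k) * ∫ ω, |ξ ω| ^ (p + 1) ∂μ := by
    intro k hk
    obtain ⟨hk1, hkp⟩ := mem_Icc.1 hk
    have hprod := integral_abs_pow_mul_integral_abs_pow_le (μ := μ) (ξ := ξ)
      (hint k (by omega)) (hint (p + 1 - k) (by omega)) (hint (k + (p + 1 - k)) (by omega))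
    rw [Nat.add_sub_cancel' (by omega)] at hprod
    rw [mul_assoc]
    refine mul_le_mul_of_nonneg_left ?_ (Nat.cast_nonneg _)
    calc |κ k| * ∫ ω, |ξ ω| ^ (p + 1 - k) ∂μ
        ≤ (2 ^ (k * k) * ∫ ω, |ξ ω| ^ k ∂μ) * ∫ ω, |ξ ω| ^ (p + 1 - k) ∂μ :=
          mul_le_mul_of_nonneg_right (ih k (by omega) hk1 (by omega))
            (integral_nonneg fun ω => by positivity)
      _ ≤ 2 ^ (k * k) * ∫ ω, |ξ ω| ^ (p + 1) ∂μ := by rw [mul_assoc]; gcongr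
  have hconst : (1 + ∑ k ∈ Icc 1 p, (p.choose (k - 1) : ℝ) * 2 ^ (k * k))
      ≤ 2 ^ ((p + 1) * (p + 1)) := by exact_mod_cast one_add_sum_choose_mul_two_pow_sq_le p
  calc |κ (p + 1)|
      ≤ ∫ ω, |ξ ω| ^ (p + 1) ∂μ
        + ∑ k ∈ Icc 1 p, (p.choose (k - 1) : ℝ) * 2 ^ (k * k) * ∫ ω, |ξ ω| ^ (p + 1) ∂μ :=
        (h.abs_cumulant_succ_le hmn).trans (add_le_add le_rfl (sum_le_sum hterm))
    _ = (1 + ∑ k ∈ Icc 1 p, (p.choose (k - 1) : ℝ) * 2 ^ (k * k)) * ∫ ω, |ξ ω| ^ (p + 1) ∂μ := by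
        rw [add_mul, one_mul, sum_mul]
    _ ≤ 2 ^ ((p + 1) * (p + 1)) * ∫ ω, |ξ ω| ^ (p + 1) ∂μ := by gcongr

theorem abs_cumulant_mul_abs_integral_comp_le (h : HasCumulantsUpTo μ ξ κ n) (hξ : Measurable ξ)
    (hint : ∀ m ≤ n, Integrable (fun ω => |ξ ω| ^ m) μ) {m i : ℕ} (hm : 1 ≤ m) (hmi : m + i = n)
    {H : ℝ → ℝ} {χ M₁ M₂ : ℝ} (hM₁ : 0 ≤ M₁) (hM₂ : 0 ≤ M₂)
    (hin : ∀ x, |x| ≤ χ → |H x| ≤ M₁ * |x| ^ i) (hout : ∀ x, |H x| ≤ M₂ * |x| ^ i) :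
    |κ m| * |∫ ω, H (ξ ω) ∂μ| ≤ 2 ^ (m * m) * (M₁ * ∫ ω, |ξ ω| ^ n ∂μ
      + M₂ * ∫ ω, {ω' | χ < |ξ ω'|}.indicator (fun ω' => |ξ ω'| ^ n) ω ∂μ) := by
  have hmi_int : Integrable (fun ω => |ξ ω| ^ (m + i)) μ := hmi ▸ hint n le_rfl
  have hbulk := integral_abs_pow_mul_integral_abs_pow_le (hint m (by omega)) (hint i (by omega))
    hmi_int
  have htail := integral_abs_pow_mul_integral_tail_le χ hξ (hint m (by omega))
    (hint i (by omega)) hmi_int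
  rw [hmi] at hbulk htail
  calc |κ m| * |∫ ω, H (ξ ω) ∂μ|
      ≤ (2 ^ (m * m) * ∫ ω, |ξ ω| ^ m ∂μ) * (M₁ * ∫ ω, |ξ ω| ^ i ∂μ
          + M₂ * ∫ ω, {ω' | χ < |ξ ω'|}.indicator (fun ω' => |ξ ω'| ^ i) ω ∂μ) :=
        mul_le_mul (h.abs_cumulant_le hint hm (by omega))
          (abs_integral_comp_le hM₁ hin hout hξ (hint i (by omega))) (abs_nonneg _)
          (by positivity)
    _ = 2 ^ (m * m) * (M₁ * ((∫ ω, |ξ ω| ^ m ∂μ) * ∫ ω, |ξ ω| ^ i ∂μ)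
          + M₂ * ((∫ ω, |ξ ω| ^ m ∂μ)
            * ∫ ω, {ω' | χ < |ξ ω'|}.indicator (fun ω' => |ξ ω'| ^ i) ω ∂μ)) := by ring
    _ ≤ _ := by gcongr

end HasCumulantsUpTo

end Cumulants

section SteinDefect

variable {Ω : Type*} [MeasurableSpace Ω] {μ : Measure Ω} {ξ : Ω → ℝ} {κ : ℕ → ℝ} {ℓ : ℕ}

noncomputable def steinDefect (μ : Measure Ω) (ξ : Ω → ℝ) (κ : ℕ → ℝ) (ℓ : ℕ) (h : ℝ → ℝ) : ℝ :=
  ∫ ω, ξ ω * h (ξ ω) ∂μ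
    - ∑ k ∈ Icc 1 ℓ, κ (k + 1) / (k.factorial : ℝ) * ∫ ω, iteratedDeriv k h (ξ ω) ∂μ

theorem steinDefect_sub {f g : ℝ → ℝ} (hf : ContDiff ℝ ℓ f) (hg : ContDiff ℝ ℓ g)
    (hfξ : Integrable (fun ω => ξ ω * f (ξ ω)) μ) (hgξ : Integrable (fun ω => ξ ω * g (ξ ω)) μ)
    (hfk : ∀ k ∈ Icc 1 ℓ, Integrable (fun ω => iteratedDeriv k f (ξ ω)) μ)
    (hgk : ∀ k ∈ Icc 1 ℓ, Integrable (fun ω => iteratedDeriv k g (ξ ω)) μ) :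
    steinDefect μ ξ κ ℓ (f - g) = steinDefect μ ξ κ ℓ f - steinDefect μ ξ κ ℓ g := by
  have hderiv : ∀ k ∈ Icc 1 ℓ, ∫ ω, iteratedDeriv k (f - g) (ξ ω) ∂μ
      = ∫ ω, iteratedDeriv k f (ξ ω) ∂μ - ∫ ω, iteratedDeriv k g (ξ ω) ∂μ := by
    intro k hk
    have hkℓ : (k : WithTop ℕ∞) ≤ ℓ := by exact_mod_cast (mem_Icc.1 hk).2
    simp only [iteratedDeriv_sub ((hf.of_le hkℓ).contDiffAt) ((hg.of_le hkℓ).contDiffAt)]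
    exact integral_sub (hfk k hk) (hgk k hk)
  simp only [steinDefect, Pi.sub_apply, mul_sub, integral_sub hfξ hgξ]
  rw [sum_congr rfl fun k hk => by rw [hderiv k hk, mul_sub], sum_sub_distrib]
  ring

theorem integrable_mul_sum_mul_pow_comp (hint : ∀ m ≤ ℓ + 1, Integrable (fun ω => ξ ω ^ m) μ)
    (c : ℕ → ℝ) :
    Integrable (fun ω => ξ ω * ∑ j ∈ range (ℓ + 1), c j * ξ ω ^ j) μ := by
  simp only [mul_sum, mul_left_comm (ξ _), ← pow_succ']
  exact integrable_finsetSum _ fun j hj => (hint _ (by simpa using hj)).const_mul _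

theorem integrable_iteratedDeriv_sum_mul_pow_comp
    (hint : ∀ m ≤ ℓ, Integrable (fun ω => ξ ω ^ m) μ) (c : ℕ → ℝ) (k : ℕ) :
    Integrable (fun ω => iteratedDeriv k (fun x => ∑ j ∈ range (ℓ + 1), c j * x ^ j) (ξ ω)) μ := by
  simp only [iteratedDeriv_sum_mul_pow]
  exact integrable_finsetSum _ fun j hj =>
    ((hint _ (by simp at hj; omega)).const_mul _).const_mul _

theorem steinDefect_sum_mul_pow_eq_zero (hrec : HasCumulantsUpTo μ ξ κ (ℓ + 1)) (hκ : κ 1 = 0)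
    (hint : ∀ m ≤ ℓ + 1, Integrable (fun ω => ξ ω ^ m) μ) (c : ℕ → ℝ) :
    steinDefect μ ξ κ ℓ (fun x => ∑ j ∈ range (ℓ + 1), c j * x ^ j) = 0 := by
  have hmul : ∫ ω, ξ ω * ∑ j ∈ range (ℓ + 1), c j * ξ ω ^ j ∂μ
      = ∑ j ∈ range (ℓ + 1), c j * ∫ ω, ξ ω ^ (j + 1) ∂μ := by
    simp only [mul_sum, mul_left_comm (ξ _), ← pow_succ']
    rw [integral_finsetSum _ fun j hj => (hint _ (by simpa using hj)).const_mul _]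
    simp only [integral_const_mul]
  have hderiv (k : ℕ) : ∫ ω, iteratedDeriv k (fun x => ∑ j ∈ range (ℓ + 1), c j * x ^ j) (ξ ω) ∂μ
      = ∑ j ∈ range (ℓ + 1), c j * ((j.descFactorial k : ℝ) * ∫ ω, ξ ω ^ (j - k) ∂μ) := by
    simp only [iteratedDeriv_sum_mul_pow]
    rw [integral_finsetSum _ fun j hj =>
      ((hint _ (by simp at hj; omega)).const_mul _).const_mul _]
    simp only [integral_const_mul]
  rw [steinDefect, hmul, sub_eq_zero]
  simp only [hderiv, mul_sum]
  rw [sum_comm]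
  refine sum_congr rfl fun j hj => ?_
  rw [hrec.integral_pow_succ hκ (by simp at hj; omega) (by simpa [Nat.lt_succ_iff] using hj),
    mul_sum]
  refine sum_congr rfl fun k _ => ?_
  rw [Nat.descFactorial_eq_factorial_mul_choose]
  field_simp
  push_cast
  ring

variable [IsProbabilityMeasure μ]

theorem steinDefect_sub_maclaurinPoly (hξ : Measurable ξ)
    (hint : ∀ m ≤ ℓ + 1, Integrable (fun ω => |ξ ω| ^ m) μ) (hrec : HasCumulantsUpTo μ ξ κ (ℓ + 1))
    (hcent : ∫ ω, ξ ω ∂μ = 0) {f : ℝ → ℝ} (hf : ContDiff ℝ ℓ f)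
    (hbdd : ∀ k ≤ ℓ, ∃ B, ∀ t, |iteratedDeriv k f t| ≤ B) :
    steinDefect μ ξ κ ℓ (f - maclaurinPoly f ℓ) = steinDefect μ ξ κ ℓ f := by
  have hpow (m : ℕ) (hm : m ≤ ℓ + 1) : Integrable (fun ω => ξ ω ^ m) μ :=
    (integrable_norm_iff (hξ.pow_const m).aestronglyMeasurable).1 (by simpa using hint m hm)
  have hfk (k : ℕ) (hk : k ≤ ℓ) : Integrable (fun ω => iteratedDeriv k f (ξ ω)) μ := by
    obtain ⟨B, hB⟩ := hbdd k hk
    exact integrable_comp_of_abs_le_mul_abs_pow (i := 0)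
      (hf.continuous_iteratedDeriv k (by exact_mod_cast hk)) (by simpa using hB) hξ
      (hint 0 (by omega))
  have hfξ : Integrable (fun ω => ξ ω * f (ξ ω)) μ := by
    obtain ⟨B, hB⟩ := hbdd 0 (by omega)
    exact integrable_comp_of_abs_le_mul_abs_pow (H := fun x => x * f x) (i := 1)
      (continuous_id.mul hf.continuous)
      (fun x => by rw [abs_mul, pow_one, mul_comm]; gcongr; simpa using hB x) hξ
      (hint 1 (by omega))
  rw [steinDefect_sub hf (contDiff_maclaurinPoly f ℓ) hfξ
    (integrable_mul_sum_mul_pow_comp hpow _) (fun k hk => hfk k (mem_Icc.1 hk).2)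
    (fun k _ => integrable_iteratedDeriv_sum_mul_pow_comp (fun m hm => hpow m (by omega)) _ k),
    show steinDefect μ ξ κ ℓ (maclaurinPoly f ℓ) = 0 from
      steinDefect_sum_mul_pow_eq_zero hrec ((hrec.cumulant_one (by omega)).trans hcent) hpow _,
    sub_zero]

theorem abs_steinDefect_le_of_iteratedDeriv_eq_zero (hξ : Measurable ξ)
    (hint : ∀ m ≤ ℓ + 2, Integrable (fun ω => |ξ ω| ^ m) μ)
    (hrec : HasCumulantsUpTo μ ξ κ (ℓ + 2))
    {g : ℝ → ℝ} (hg : ContDiff ℝ (ℓ + 1) g) (h0 : ∀ k < ℓ + 1, iteratedDeriv k g 0 = 0)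
    {χ M₁ M₂ : ℝ} (hM₁ : 0 ≤ M₁) (hin : ∀ t, |t| ≤ χ → |iteratedDeriv (ℓ + 1) g t| ≤ M₁)
    (hout : ∀ t, |iteratedDeriv (ℓ + 1) g t| ≤ M₂) :
    |steinDefect μ ξ κ ℓ g|
      ≤ (1 + ℓ * 2 ^ ((ℓ + 1) * (ℓ + 1))) * (∫ ω, |ξ ω| ^ (ℓ + 2) ∂μ) * M₁
        + (1 + ℓ * 2 ^ ((ℓ + 1) * (ℓ + 1)))
          * (∫ ω, {ω' | χ < |ξ ω'|}.indicator (fun ω' => |ξ ω'| ^ (ℓ + 2)) ω ∂μ) * M₂ := by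
  set B := M₁ * ∫ ω, |ξ ω| ^ (ℓ + 2) ∂μ
    + M₂ * ∫ ω, {ω' | χ < |ξ ω'|}.indicator (fun ω' => |ξ ω'| ^ (ℓ + 2)) ω ∂μ
  have hM₂ : 0 ≤ M₂ := (abs_nonneg _).trans (hout 0)
  have hB : 0 ≤ B := add_nonneg (mul_nonneg hM₁ (integral_nonneg fun ω => by positivity))
    (mul_nonneg hM₂ (integral_nonneg fun ω => Set.indicator_nonneg (fun ω _ => by positivity) ω))
  have hbound_in {k i : ℕ} (hki : k + i = ℓ + 1) (x : ℝ) (hx : |x| ≤ χ) :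
      |iteratedDeriv k g x| ≤ M₁ * |x| ^ i :=
    abs_iteratedDeriv_le_mul_abs_pow hg h0 hin hki hx
  have hbound_out {k i : ℕ} (hki : k + i = ℓ + 1) (x : ℝ) :
      |iteratedDeriv k g x| ≤ M₂ * |x| ^ i :=
    abs_iteratedDeriv_le_mul_abs_pow hg h0 (r := |x|) (fun t _ => hout t) hki le_rfl
  have hmul {M x : ℝ} (hgx : |g x| ≤ M * |x| ^ (ℓ + 1)) : |x * g x| ≤ M * |x| ^ (ℓ + 2) := by
    rw [abs_mul, pow_succ]; nlinarith [abs_nonneg x]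
  have hfirst : |∫ ω, ξ ω * g (ξ ω) ∂μ| ≤ B :=
    abs_integral_comp_le (H := fun x => x * g x) hM₁
      (fun x hx => hmul (by simpa using hbound_in (k := 0) (by omega) x hx))
      (fun x => hmul (by simpa using hbound_out (k := 0) (by omega) x)) hξ (hint _ le_rfl)
  have hterm : ∀ k ∈ Icc 1 ℓ, |κ (k + 1) / (k.factorial : ℝ) * ∫ ω, iteratedDeriv k g (ξ ω) ∂μ|
      ≤ 2 ^ ((ℓ + 1) * (ℓ + 1)) * B := by
    intro k hk
    obtain ⟨hk1, hkℓ⟩ := mem_Icc.1 hk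
    have hκ := hrec.abs_cumulant_mul_abs_integral_comp_le hξ hint (m := k + 1) (i := ℓ + 1 - k)
      (by omega) (by omega) hM₁ hM₂ (hbound_in (k := k) (by omega))
      (hbound_out (k := k) (by omega))
    calc |κ (k + 1) / (k.factorial : ℝ) * ∫ ω, iteratedDeriv k g (ξ ω) ∂μ|
        ≤ |κ (k + 1)| * |∫ ω, iteratedDeriv k g (ξ ω) ∂μ| := by
          rw [abs_mul, abs_div, Nat.abs_cast]
          gcongr
          exact div_le_self (abs_nonneg _) (by exact_mod_cast k.factorial_pos)
      _ ≤ 2 ^ ((k + 1) * (k + 1)) * B := hκ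
      _ ≤ 2 ^ ((ℓ + 1) * (ℓ + 1)) * B := by gcongr; norm_num
  calc |steinDefect μ ξ κ ℓ g|
      ≤ |∫ ω, ξ ω * g (ξ ω) ∂μ|
        + ∑ k ∈ Icc 1 ℓ, |κ (k + 1) / (k.factorial : ℝ) * ∫ ω, iteratedDeriv k g (ξ ω) ∂μ| :=
        (abs_sub _ _).trans (add_le_add le_rfl (abs_sum_le_sum_abs _ _))
    _ ≤ B + ℓ * (2 ^ ((ℓ + 1) * (ℓ + 1)) * B) := by
        gcongr
        simpa using sum_le_sum hterm
    _ = _ := by ring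

end SteinDefect

/-- **Cumulant expansion.**  For every `ℓ` there is a constant `C_ℓ` such that for every
centered real random variable `ξ` with finite first `ℓ+2` moments, cumulants `κ`, and every
`f ∈ C^{ℓ+1}(ℝ)` with bounded derivatives and every `χ > 0`,
`| E(ξ f(ξ)) − Σ_{k=1}^ℓ (κ_{k+1}/k!) E f^{(k)}(ξ) |
  ≤ C_ℓ E|ξ|^{ℓ+2} sup_{|t|≤χ} |f^{(ℓ+1)}(t)| + C_ℓ E(|ξ|^{ℓ+2} 1_{|ξ|>χ}) sup_t |f^{(ℓ+1)}(t)|`. -/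
theorem cumulant_expansion (ℓ : ℕ) :
    ∃ Cℓ : ℝ, 0 < Cℓ ∧
      ∀ (Ω : Type) (_ : MeasureSpace Ω),
        IsProbabilityMeasure (volume : Measure Ω) →
        ∀ (ξ : Ω → ℝ) (κ : ℕ → ℝ) (f : ℝ → ℝ),
          Measurable ξ →
          (∀ m : ℕ, m ≤ ℓ + 2 → Integrable (fun ω => |ξ ω| ^ m)) →
          (∫ ω, ξ ω) = 0 →
          -- moment–cumulant recursion characterizing the cumulants of ξ
          (∀ m : ℕ, 1 ≤ m → m ≤ ℓ + 2 →
            (∫ ω, ξ ω ^ m)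
              = ∑ k ∈ Finset.Icc 1 m, ((m - 1).choose (k - 1) : ℝ) * κ k * ∫ ω, ξ ω ^ (m - k)) →
          ContDiff ℝ (ℓ + 1) f →
          (∀ k : ℕ, k ≤ ℓ + 1 → ∃ B, ∀ t, |iteratedDeriv k f t| ≤ B) →
          ∀ χ : ℝ, 0 < χ →
            |(∫ ω, ξ ω * f (ξ ω))
                - ∑ k ∈ Finset.Icc 1 ℓ,
                    κ (k + 1) / (k.factorial : ℝ) * ∫ ω, iteratedDeriv k f (ξ ω)|
              ≤ Cℓ * (∫ ω, |ξ ω| ^ (ℓ + 2))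
                    * (⨆ t : Set.Icc (-χ) χ, |iteratedDeriv (ℓ + 1) f (t : ℝ)|)
                + Cℓ * (∫ ω, Set.indicator {ω' | χ < |ξ ω'|} (fun ω' => |ξ ω'| ^ (ℓ + 2)) ω)
                    * (⨆ t : ℝ, |iteratedDeriv (ℓ + 1) f t|) := by
  refine ⟨1 + ℓ * 2 ^ ((ℓ + 1) * (ℓ + 1)), by positivity, ?_⟩
  intro Ω _ _ ξ κ f hξ hint hcent (hrec : HasCumulantsUpTo volume ξ κ (ℓ + 2)) hf hbdd χ _
  obtain ⟨B, hB⟩ := hbdd (ℓ + 1) le_rfl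
  have hremainder := iteratedDeriv_succ_sub_maclaurinPoly hf
  change |steinDefect volume ξ κ ℓ f| ≤ _
  rw [← steinDefect_sub_maclaurinPoly hξ (fun m hm => hint m (by omega)) (hrec.mono (by omega))
    hcent (hf.of_le (by norm_cast; omega)) (fun k hk => hbdd k (by omega))]
  refine abs_steinDefect_le_of_iteratedDeriv_eq_zero (g := f - maclaurinPoly f ℓ) hξ hint hrec
    (hf.sub (contDiff_maclaurinPoly f ℓ))
    (fun k hk => iteratedDeriv_sub_maclaurinPoly_zero (hf.of_le (by norm_cast; omega)) (by omega))
    (Real.iSup_nonneg fun _ => abs_nonneg _) (fun t ht => ?_) (fun t => ?_) <;>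
    rw [hremainder]
  · exact le_ciSup (f := fun s : Set.Icc (-χ) χ => |iteratedDeriv (ℓ + 1) f s|)
      ⟨B, Set.forall_mem_range.2 fun s => hB s⟩ ⟨t, abs_le.1 ht⟩
  · exact le_ciSup ⟨B, Set.forall_mem_range.2 hB⟩ t
end
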